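/- Let Δ ⊆ ℝ³ be the set of points (x,y,z) with 1+x+y+z ≥ 0, 1+x−y−z ≥ 0, 1−x+y−z ≥ 0 and 1−x−y+z ≥ 0. Then the Lebesgue volume of Δ_+ := Δ ∩ {(x,y,z) : x > 0, y > 0, z > 0} (K3 Markov matrices with positive eigenvalues) is 1/2, and the Lebesgue volume of Δ_* := Δ ∩ {(x,y,z) : x+y ≥ 0, x+z ≥ 0, y+z ≥ 0} (K3 Markov matrices with a ≥ b, a ≥ c and a ≥ d) is 2/3. -/

import Mathlib

/-!
Slicing at fixed `x` and then at fixed `y`, the remaining coordinate `z` of a point of `Δ` ranges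
over `[|x + y| - 1, 1 - |x - y|]`, and for `Δ₊` over `(max 0 (x + y - 1), 1 - |x - y|]`. Integrating
these lengths in `y` gives cross-sections of area `2 - 2x²` and `(1 + 2x - 3x²)/2`, hence
`vol Δ = 8/3` and `vol Δ₊ = 1/2`.

For `Δ_*` we use symmetry: changing the signs of two of `x, y, z` permutes `a, b, c, d`, preserves
`Δ` and volume, and carries `Δ_* = {a is largest}` onto `{b is largest}`, `{c is largest}` and
`{d is largest}`. These four regions cover `Δ` and meet only in planes, so
`vol Δ_* = vol Δ / 4 = 2/3`.
-/

open MeasureTheory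

/-- The simplex of eigenvalue triples of K3 Markov matrices. -/
def Δ : Set (ℝ × ℝ × ℝ) :=
  {p | 0 ≤ 1 + p.1 + p.2.1 + p.2.2 ∧ 0 ≤ 1 + p.1 - p.2.1 - p.2.2 ∧
       0 ≤ 1 - p.1 + p.2.1 - p.2.2 ∧ 0 ≤ 1 - p.1 - p.2.1 + p.2.2}

open Set

lemma volume_eq_ofReal_sub_of_Ioo_subset_of_subset_Icc {s : Set ℝ} {a b : ℝ}
    (h₁ : Ioo a b ⊆ s) (h₂ : s ⊆ Icc a b) : volume s = ENNReal.ofReal (b - a) :=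
  le_antisymm ((measure_mono h₂).trans_eq Real.volume_Icc)
    (Real.volume_Ioo ▸ measure_mono h₁)

theorem volume_eq_ofReal_integral_of_slices {β : Type*} [MeasureSpace β]
    [SFinite (volume : Measure β)] {S : Set (ℝ × β)} (hS : MeasurableSet S) {a b : ℝ}
    (hab : a ≤ b) {F : ℝ → ℝ} (hF : Continuous F) (hF₀ : ∀ x ∈ Icc a b, 0 ≤ F x)
    (hslice : ∀ x ∈ Ioo a b, volume (Prod.mk x ⁻¹' S) = ENNReal.ofReal (F x))
    (hout : ∀ x ∉ Icc a b, Prod.mk x ⁻¹' S = ∅) :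
    volume S = ENNReal.ofReal (∫ x in a..b, F x) := by
  have hends : ∀ᵐ x ∂(volume : Measure ℝ), x ≠ a ∧ x ≠ b := by
    have : (volume : Measure ℝ) {a, b} = 0 := (toFinite _).measure_zero _
    filter_upwards [measure_eq_zero_iff_ae_notMem.1 this] with x hx
    simpa [not_or] using hx
  have hae : (fun x => volume (Prod.mk x ⁻¹' S)) =ᵐ[volume]
      (Ioo a b).indicator fun x => ENNReal.ofReal (F x) := by
    filter_upwards [hends] with x ⟨hxa, hxb⟩
    by_cases hx : x ∈ Ioo a b
    · rw [indicator_of_mem hx, hslice x hx]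
    · have : x ∉ Icc a b := fun h => hx ⟨h.1.lt_of_ne' hxa, h.2.lt_of_ne hxb⟩
      rw [indicator_of_notMem hx, hout x this, measure_empty]
  rw [Measure.volume_eq_prod, Measure.prod_apply hS, lintegral_congr_ae hae,
    lintegral_indicator measurableSet_Ioo, setLIntegral_congr Ioo_ae_eq_Ioc,
    intervalIntegral.integral_of_le hab, ofReal_integral_eq_lintegral_ofReal
      (hF.integrableOn_Icc.mono_set Ioc_subset_Icc_self)
      ((ae_restrict_iff' measurableSet_Ioc).2 <| ae_of_all _ fun x hx =>
        hF₀ x (Ioc_subset_Icc_self hx))]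

theorem integral_abs_sub {a b c : ℝ} (hac : a ≤ c) (hcb : c ≤ b) :
    ∫ y in a..b, |y - c| = ((c - a) ^ 2 + (b - c) ^ 2) / 2 := by
  have hint (u v : ℝ) : IntervalIntegrable (fun y => |y - c|) volume u v :=
    Continuous.intervalIntegrable (by fun_prop) u v
  rw [← intervalIntegral.integral_add_adjacent_intervals (hint a c) (hint c b),
    intervalIntegral.integral_congr (g := fun y => -(y - c)) fun y hy => abs_of_nonpos (by
      rw [uIcc_of_le hac] at hy; linarith [hy.2]),
    intervalIntegral.integral_congr (g := fun y => y - c) fun y hy => abs_of_nonneg (by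
      rw [uIcc_of_le hcb] at hy; linarith [hy.1]),
    intervalIntegral.integral_neg, intervalIntegral.integral_comp_sub_right (fun y => y),
    intervalIntegral.integral_comp_sub_right (fun y => y), integral_id, integral_id]
  ring

theorem integral_max_zero_sub {a b c : ℝ} (hac : a ≤ c) (hcb : c ≤ b) :
    ∫ y in a..b, max 0 (y - c) = (b - c) ^ 2 / 2 := by
  have hint (u v : ℝ) : IntervalIntegrable (fun y => max 0 (y - c)) volume u v :=
    Continuous.intervalIntegrable (by fun_prop) u v
  rw [← intervalIntegral.integral_add_adjacent_intervals (hint a c) (hint c b),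
    intervalIntegral.integral_congr (g := fun _ => 0) fun y hy => max_eq_left (by
      rw [uIcc_of_le hac] at hy; linarith [hy.2]),
    intervalIntegral.integral_congr (g := fun y => y - c) fun y hy => max_eq_right (by
      rw [uIcc_of_le hcb] at hy; linarith [hy.1]),
    intervalIntegral.integral_zero, intervalIntegral.integral_comp_sub_right (fun y => y),
    integral_id]
  ring

lemma exists_max_four {α : Type*} [LinearOrder α] (a b c d : α) :
    (b ≤ a ∧ c ≤ a ∧ d ≤ a) ∨ (a ≤ b ∧ c ≤ b ∧ d ≤ b) ∨ (a ≤ c ∧ b ≤ c ∧ d ≤ c) ∨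
      (a ≤ d ∧ b ≤ d ∧ c ≤ d) := by
  grind

lemma volume_hyperplane {α β γ : ℝ} (h : (α, β, γ) ≠ 0) :
    volume {p : ℝ × ℝ × ℝ | α * p.1 + β * p.2.1 + γ * p.2.2 = 0} = 0 := by
  let φ : ℝ × ℝ × ℝ →ₗ[ℝ] ℝ := α • LinearMap.fst ℝ ℝ (ℝ × ℝ) +
    β • (LinearMap.fst ℝ ℝ ℝ ∘ₗ LinearMap.snd ℝ ℝ (ℝ × ℝ)) +
    γ • (LinearMap.snd ℝ ℝ ℝ ∘ₗ LinearMap.snd ℝ ℝ (ℝ × ℝ))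
  have hφ : φ ≠ 0 := fun h0 => h <| by
    have h₁ := LinearMap.congr_fun h0 (1, 0, 0)
    have h₂ := LinearMap.congr_fun h0 (0, 1, 0)
    have h₃ := LinearMap.congr_fun h0 (0, 0, 1)
    simp [φ] at h₁ h₂ h₃
    simp [h₁, h₂, h₃]
  -- instance search does not unfold the iterated product `volume`
  have : (volume : Measure (ℝ × ℝ × ℝ)).IsAddHaarMeasure :=
    Measure.prod.instIsAddHaarMeasure _ _
  exact Measure.addHaar_submodule volume (LinearMap.ker φ) (mt LinearMap.ker_eq_top.1 hφ)

lemma aedisjoint_of_subset_hyperplane {s t : Set (ℝ × ℝ × ℝ)} {α β γ : ℝ}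
    (h : (α, β, γ) ≠ 0) (hst : ∀ p ∈ s, p ∈ t → α * p.1 + β * p.2.1 + γ * p.2.2 = 0) :
    AEDisjoint volume s t :=
  measure_mono_null (fun p ⟨hs, ht⟩ => hst p hs ht) (volume_hyperplane h)

lemma measurableSet_Δ : MeasurableSet Δ := by
  unfold Δ; measurability

def Δpos : Set (ℝ × ℝ × ℝ) := Δ ∩ {p | 0 < p.1 ∧ 0 < p.2.1 ∧ 0 < p.2.2}

def Δstar : Set (ℝ × ℝ × ℝ) :=
  Δ ∩ {p | 0 ≤ p.1 + p.2.1 ∧ 0 ≤ p.1 + p.2.2 ∧ 0 ≤ p.2.1 + p.2.2}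

lemma measurableSet_Δpos : MeasurableSet Δpos := by
  unfold Δpos Δ; measurability

lemma measurableSet_Δstar : MeasurableSet Δstar := by
  unfold Δstar Δ; measurability

lemma volume_slice_Δ {x : ℝ} (hx : x ∈ Ioo (-1 : ℝ) 1) :
    volume (Prod.mk x ⁻¹' Δ) = ENNReal.ofReal (2 - 2 * x ^ 2) := by
  obtain ⟨hx₀, hx₁⟩ := hx
  rw [volume_eq_ofReal_integral_of_slices (measurable_prodMk_left measurableSet_Δ)
    (by norm_num : (-1 : ℝ) ≤ 1) (F := fun y => 1 - |y - x| - (-1 + |y - -x|))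
    (by fun_prop) ?_ ?_ ?_]
  · congr 1
    rw [intervalIntegral.integral_sub (Continuous.intervalIntegrable (by fun_prop) _ _)
      (Continuous.intervalIntegrable (by fun_prop) _ _),
      intervalIntegral.integral_sub (by simp) (Continuous.intervalIntegrable (by fun_prop) _ _),
      intervalIntegral.integral_add (by simp) (Continuous.intervalIntegrable (by fun_prop) _ _),
      integral_abs_sub hx₀.le hx₁.le, integral_abs_sub (by linarith) (by linarith)]
    simp; ring
  · intro y ⟨hy₀, hy₁⟩
    rcases abs_cases (y - x) with ⟨h, -⟩ | ⟨h, -⟩ <;>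
      rcases abs_cases (y - -x) with ⟨h', -⟩ | ⟨h', -⟩ <;> linarith
  · intro y hy
    refine volume_eq_ofReal_sub_of_Ioo_subset_of_subset_Icc ?_ ?_
    · rintro z ⟨hz₀, hz₁⟩
      have := le_abs_self (y - x); have := neg_abs_le (y - x)
      have := le_abs_self (y - -x); have := neg_abs_le (y - -x)
      exact ⟨by linarith, by linarith, by linarith, by linarith⟩
    · rintro z ⟨h₁, h₂, h₃, h₄⟩
      have hlow : |y - -x| ≤ z + 1 := abs_le.2 ⟨by linarith, by linarith⟩
      have hupp : |y - x| ≤ 1 - z := abs_le.2 ⟨by linarith, by linarith⟩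
      exact ⟨by linarith, by linarith⟩
  · intro y hy
    exact eq_empty_of_forall_notMem fun z ⟨h₁, h₂, h₃, h₄⟩ => hy ⟨by linarith, by linarith⟩

theorem volume_Δ : volume Δ = 8 / 3 := by
  rw [volume_eq_ofReal_integral_of_slices measurableSet_Δ (by norm_num : (-1 : ℝ) ≤ 1)
    (F := fun x => 2 - 2 * x ^ 2) (by fun_prop) ?_ (fun x hx => volume_slice_Δ hx) ?_]
  · norm_num [ENNReal.ofReal_div_of_pos]
  · intro x ⟨hx₀, hx₁⟩
    nlinarith
  · intro x hx
    exact eq_empty_of_forall_notMem fun q ⟨h₁, h₂, h₃, h₄⟩ => hx ⟨by linarith, by linarith⟩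

lemma volume_slice_Δpos {x : ℝ} (hx : x ∈ Ioo (0 : ℝ) 1) :
    volume (Prod.mk x ⁻¹' Δpos) = ENNReal.ofReal ((1 + 2 * x - 3 * x ^ 2) / 2) := by
  obtain ⟨hx₀, hx₁⟩ := hx
  rw [volume_eq_ofReal_integral_of_slices (measurable_prodMk_left measurableSet_Δpos)
    zero_le_one (F := fun y => 1 - |y - x| - max 0 (y - (1 - x))) (by fun_prop) ?_ ?_ ?_]
  · congr 1
    rw [intervalIntegral.integral_sub (Continuous.intervalIntegrable (by fun_prop) _ _)
      (Continuous.intervalIntegrable (by fun_prop) _ _),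
      intervalIntegral.integral_sub (by simp) (Continuous.intervalIntegrable (by fun_prop) _ _),
      integral_abs_sub hx₀.le hx₁.le, integral_max_zero_sub (by linarith) (by linarith)]
    simp; ring
  · intro y ⟨hy₀, hy₁⟩
    rcases abs_cases (y - x) with ⟨h, -⟩ | ⟨h, -⟩ <;>
      rcases max_cases 0 (y - (1 - x)) with ⟨h', -⟩ | ⟨h', -⟩ <;> linarith
  · intro y ⟨hy₀, hy₁⟩
    refine volume_eq_ofReal_sub_of_Ioo_subset_of_subset_Icc ?_ ?_
    · rintro z ⟨hz₀, hz₁⟩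
      rw [max_lt_iff] at hz₀
      have := le_abs_self (y - x); have := neg_abs_le (y - x)
      exact ⟨⟨by linarith, by linarith, by linarith, by linarith⟩, hx₀, hy₀, hz₀.1⟩
    · rintro z ⟨⟨h₁, h₂, h₃, h₄⟩, -, -, hz⟩
      have hupp : |y - x| ≤ 1 - z := abs_le.2 ⟨by linarith, by linarith⟩
      exact ⟨max_le hz.le (by linarith), by linarith⟩
  · intro y hy
    exact eq_empty_of_forall_notMem fun z ⟨⟨h₁, h₂, h₃, h₄⟩, _, hy₀, _⟩ =>
      hy ⟨hy₀.le, by linarith⟩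

theorem volume_Δpos : volume Δpos = 1 / 2 := by
  rw [volume_eq_ofReal_integral_of_slices measurableSet_Δpos zero_le_one
    (F := fun x => (1 + 2 * x - 3 * x ^ 2) / 2) (by fun_prop) ?_
    (fun x hx => volume_slice_Δpos hx) ?_]
  · rw [intervalIntegral.integral_div,
      intervalIntegral.integral_sub (Continuous.intervalIntegrable (by fun_prop) _ _)
        (Continuous.intervalIntegrable (by fun_prop) _ _),
      intervalIntegral.integral_add (by simp) (Continuous.intervalIntegrable (by fun_prop) _ _),
      intervalIntegral.integral_const_mul]
    norm_num [integral_id, ENNReal.ofReal_div_of_pos]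
  · intro x ⟨hx₀, hx₁⟩
    nlinarith
  · intro x hx
    exact eq_empty_of_forall_notMem fun q ⟨⟨h₁, h₂, h₃, h₄⟩, hx₀, _, _⟩ =>
      hx ⟨hx₀.le, by linarith⟩

/-- Changing the signs of two eigenvalues: on `K(a,b,c,d)`, `σ₁`, `σ₂`, `σ₃` exchange `a` with
`b`, `c`, `d` respectively, and the remaining two entries with each other. -/
def σ₁ (p : ℝ × ℝ × ℝ) : ℝ × ℝ × ℝ := (p.1, -p.2.1, -p.2.2)

def σ₂ (p : ℝ × ℝ × ℝ) : ℝ × ℝ × ℝ := (-p.1, p.2.1, -p.2.2)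

def σ₃ (p : ℝ × ℝ × ℝ) : ℝ × ℝ × ℝ := (-p.1, -p.2.1, p.2.2)

lemma measurePreserving_σ₁ : MeasurePreserving σ₁ :=
  (MeasurePreserving.id volume).prod
    ((Measure.measurePreserving_neg volume).prod (Measure.measurePreserving_neg volume))

lemma measurePreserving_σ₂ : MeasurePreserving σ₂ :=
  (Measure.measurePreserving_neg volume).prod
    ((MeasurePreserving.id volume).prod (Measure.measurePreserving_neg volume))

lemma measurePreserving_σ₃ : MeasurePreserving σ₃ :=
  (Measure.measurePreserving_neg volume).prod
    ((Measure.measurePreserving_neg volume).prod (MeasurePreserving.id volume))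

lemma Δ_eq_union : Δ = Δstar ∪ σ₁ ⁻¹' Δstar ∪ σ₂ ⁻¹' Δstar ∪ σ₃ ⁻¹' Δstar := by
  ext ⟨x, y, z⟩
  simp only [Δstar, Δ, σ₁, σ₂, σ₃, mem_union, mem_inter_iff, mem_preimage, mem_ofPred_eq]
  constructor
  · rintro ⟨h₁, h₂, h₃, h₄⟩
    rcases exists_max_four (1 + x + y + z) (1 + x - y - z) (1 - x + y - z) (1 - x - y + z)
      with ⟨hb, hc, hd⟩ | ⟨ha, hc, hd⟩ | ⟨ha, hb, hd⟩ | ⟨ha, hb, hc⟩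
    · exact .inl <| .inl <| .inl ⟨⟨h₁, h₂, h₃, h₄⟩, by linarith, by linarith, by linarith⟩
    · exact .inl <| .inl <| .inr ⟨⟨by linarith, by linarith, by linarith, by linarith⟩,
        by linarith, by linarith, by linarith⟩
    · exact .inl <| .inr ⟨⟨by linarith, by linarith, by linarith, by linarith⟩,
        by linarith, by linarith, by linarith⟩
    · exact .inr ⟨⟨by linarith, by linarith, by linarith, by linarith⟩,
        by linarith, by linarith, by linarith⟩
  · rintro (((⟨⟨h₁, h₂, h₃, h₄⟩, -⟩ | ⟨⟨h₁, h₂, h₃, h₄⟩, -⟩) | ⟨⟨h₁, h₂, h₃, h₄⟩, -⟩) |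
      ⟨⟨h₁, h₂, h₃, h₄⟩, -⟩) <;>
    exact ⟨by linarith, by linarith, by linarith, by linarith⟩

theorem volume_Δ_eq_four_mul : volume Δ = 4 * volume Δstar := by
  have hA := measurableSet_Δstar.nullMeasurableSet (μ := volume)
  have hB := hA.preimage measurePreserving_σ₁.quasiMeasurePreserving
  have hC := hA.preimage measurePreserving_σ₂.quasiMeasurePreserving
  have hD := hA.preimage measurePreserving_σ₃.quasiMeasurePreserving
  have hAB : AEDisjoint volume Δstar (σ₁ ⁻¹' Δstar) :=
    aedisjoint_of_subset_hyperplane (α := 0) (β := 1) (γ := 1) (by simp)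
      fun p ⟨_, _, _, h⟩ ⟨_, _, _, h'⟩ => by simp only [σ₁] at h'; linarith
  have hAC : AEDisjoint volume Δstar (σ₂ ⁻¹' Δstar) :=
    aedisjoint_of_subset_hyperplane (α := 1) (β := 0) (γ := 1) (by simp)
      fun p ⟨_, _, h, _⟩ ⟨_, _, h', _⟩ => by simp only [σ₂] at h'; linarith
  have hAD : AEDisjoint volume Δstar (σ₃ ⁻¹' Δstar) :=
    aedisjoint_of_subset_hyperplane (α := 1) (β := 1) (γ := 0) (by simp)
      fun p ⟨_, h, _, _⟩ ⟨_, h', _, _⟩ => by simp only [σ₃] at h'; linarith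
  have hBC : AEDisjoint volume (σ₁ ⁻¹' Δstar) (σ₂ ⁻¹' Δstar) :=
    aedisjoint_of_subset_hyperplane (α := 1) (β := -1) (γ := 0) (by simp)
      fun p ⟨_, h, _, _⟩ ⟨_, h', _, _⟩ => by simp only [σ₁, σ₂] at h h'; linarith
  have hBD : AEDisjoint volume (σ₁ ⁻¹' Δstar) (σ₃ ⁻¹' Δstar) :=
    aedisjoint_of_subset_hyperplane (α := 1) (β := 0) (γ := -1) (by simp)
      fun p ⟨_, _, h, _⟩ ⟨_, _, h', _⟩ => by simp only [σ₁, σ₃] at h h'; linarith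
  have hCD : AEDisjoint volume (σ₂ ⁻¹' Δstar) (σ₃ ⁻¹' Δstar) :=
    aedisjoint_of_subset_hyperplane (α := 0) (β := 1) (γ := -1) (by simp)
      fun p ⟨_, _, _, h⟩ ⟨_, _, _, h'⟩ => by simp only [σ₂, σ₃] at h h'; linarith
  rw [Δ_eq_union, measure_union₀ hD ((hAD.union_left hBD).union_left hCD),
    measure_union₀ hC (hAC.union_left hBC), measure_union₀ hB hAB,
    measurePreserving_σ₁.measure_preimage hA, measurePreserving_σ₂.measure_preimage hA,
    measurePreserving_σ₃.measure_preimage hA]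
  ring

theorem volume_Δstar : volume Δstar = 2 / 3 := by
  have h : 4 * volume Δstar = 4 * (2 / 3) := by
    rw [← volume_Δ_eq_four_mul, volume_Δ, ← mul_div_assoc]
    norm_num
  exact (ENNReal.mul_right_inj (by norm_num) (by norm_num)).1 h

theorem stmt_18 :
    volume (Δ ∩ {p : ℝ × ℝ × ℝ | 0 < p.1 ∧ 0 < p.2.1 ∧ 0 < p.2.2}) = 1 / 2 ∧
    volume (Δ ∩ {p : ℝ × ℝ × ℝ |
      0 ≤ p.1 + p.2.1 ∧ 0 ≤ p.1 + p.2.2 ∧ 0 ≤ p.2.1 + p.2.2}) = 2 / 3 :=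
  ⟨volume_Δpos, volume_Δstar⟩
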